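/- Let Ḡ : E → ℝ be any continuous solution of the kernel integral equation Ḡ = G₀ + Φ_{Ḡ}, let G_n be the successive approximation sequence G_{n+1} := G₀ + Φ_{G_n}, and set L := max_{(ξ,η)∈E} |Φ_{Ḡ}(ξ,η)|, f̄ := sup |f|, λ₁ := max{|λ₀|, max_{(x,y)∈[0,1]×[0,1]} |λ₀ - c₁(x) + c₁(y)|} and M := (λ₁ + f̄)/2. Then for every n ∈ ℕ₀ and every (ξ,η) ∈ E one has |G_n(ξ,η) - Ḡ(ξ,η)| ≤ (L·M^n/n!) · (ξ+η)^n. -/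

import Mathlib

open MeasureTheory intervalIntegral

/-- The domain `E = {(ξ,η) : 0 ≤ η ≤ 1, η ≤ ξ ≤ 2-η}`. -/
def Eset : Set (ℝ × ℝ) := {q | 0 ≤ q.2 ∧ q.2 ≤ 1 ∧ q.2 ≤ q.1 ∧ q.1 ≤ 2 - q.2}

/-- `μ̃(ξ,η) = λ₀ - c₁((ξ+η)/2) + c₁((ξ-η)/2)`. -/
noncomputable def muT (c1 : ℝ → ℝ) (lam0 ξ η : ℝ) : ℝ :=
  lam0 - c1 ((ξ + η) / 2) + c1 ((ξ - η) / 2)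

/-- The integral operator `Φ_H` of the kernel integral equation. -/
noncomputable def PhiOp (c1 : ℝ → ℝ) (lam0 : ℝ) (f : ℝ → ℝ → ℝ) (H : ℝ → ℝ → ℝ)
    (ξ η : ℝ) : ℝ :=
  (1 / 4) * (∫ τ in η..ξ, ∫ s in (0:ℝ)..η, muT c1 lam0 τ s * H τ s)
    + (1 / 2) * (∫ τ in (0:ℝ)..η, ∫ s in (0:ℝ)..τ, muT c1 lam0 τ s * H τ s)
    + (1 / 4) * (∫ z in η..ξ, ∫ s in (0:ℝ)..η, ∫ τ in z..(z + η - s),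
        f ((τ - s) / 2) (z - (τ + s) / 2) * H τ s)
    + (1 / 2) * (∫ z in (0:ℝ)..η, ∫ s in (0:ℝ)..z, ∫ τ in z..(2 * z - s),
        f ((τ - s) / 2) (z - (τ + s) / 2) * H τ s)

/-- The inhomogeneous term `G₀` of the kernel integral equation. -/
noncomputable def Gzero (lam0 : ℝ) (f : ℝ → ℝ → ℝ) (ξ η : ℝ) : ℝ :=
  lam0 / 4 * (ξ + η)
    + (1 / 4) * (∫ τ in η..ξ, ∫ s in (0:ℝ)..η, f ((τ + s) / 2) ((τ - s) / 2))
    + (1 / 2) * (∫ τ in (0:ℝ)..η, ∫ s in (0:ℝ)..τ, f ((τ + s) / 2) ((τ - s) / 2))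

/-! On `E` the operator `Φ` satisfies `|Φ_D(ξ,η)| ≤ M c (ξ+η)^(n+1)/(n+1)` whenever
`|D(τ,s)| ≤ c (τ+s)^n` on `E`: only one of the nested integrations is taken against the power,
the others contribute the lengths of their intervals, and the resulting prefactors
`λ₁ (ξ+η)/4` and `f̄ η (ξ+η)/4` are at most `λ₁/2` and `f̄/2` on `E`.
Since `G₀ - Ḡ = -Φ_Ḡ` and `G_{n+1} - Ḡ = Φ_{G_n - Ḡ}`, induction on `n` gives the bound.
Linearity of `Φ` needs integrability; as every integration region of `Φ_H(ξ,η)` lies in `E`,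
`c₁` and `H` may be replaced by continuous extensions (Tietze), for which all the nested
integrals are continuous in their parameters. -/

universe u v

theorem ContinuousOn.exists_continuous_eqOn {X : Type u} {Y : Type v} [TopologicalSpace X]
    [NormalSpace X] [TopologicalSpace Y] [TietzeExtension.{u, v} Y] {s : Set X}
    (hs : IsClosed s) {g : X → Y} (hg : ContinuousOn g s) :
    ∃ g' : X → Y, Continuous g' ∧ Set.EqOn g' g s := by
  obtain ⟨g', hg'⟩ := ContinuousMap.exists_restrict_eq hs ⟨_, hg.domRestrict⟩
  exact ⟨g', g'.continuous, fun x hx => congr($hg' ⟨x, hx⟩)⟩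

@[fun_prop]
theorem continuous_parametric_intervalIntegral_of_continuous_bounds {X : Type*}
    [TopologicalSpace X] {F : X → ℝ → ℝ} (hF : Continuous fun p : X × ℝ => F p.1 p.2)
    {u v : X → ℝ} (hu : Continuous u) (hv : Continuous v) :
    Continuous fun x => ∫ t in u x..v x, F x t := by
  have hint (x : X) (b : ℝ) : IntervalIntegrable (F x) volume 0 b :=
    (hF.uncurry_left x).intervalIntegrable _ _
  simp_rw [← fun x => integral_interval_sub_left (hint x (v x)) (hint x (u x))]
  fun_prop

namespace intervalIntegral

theorem integral_congr_of_le {a b : ℝ} (hab : a ≤ b) {g g' : ℝ → ℝ}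
    (h : ∀ t, a ≤ t → t ≤ b → g t = g' t) : ∫ t in a..b, g t = ∫ t in a..b, g' t :=
  integral_congr fun t ht => by rw [Set.uIcc_of_le hab] at ht; exact h t ht.1 ht.2

theorem abs_integral_le_of_abs_le_const {a b C : ℝ} (hab : a ≤ b) {g : ℝ → ℝ}
    (h : ∀ t ∈ Set.Ioc a b, |g t| ≤ C) : |∫ t in a..b, g t| ≤ C * (b - a) := by
  have := norm_integral_le_of_norm_le_const (f := g) (C := C) (by rwa [Set.uIoc_of_le hab])
  rwa [Real.norm_eq_abs, abs_of_nonneg (sub_nonneg.2 hab)] at this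

theorem abs_integral_le_of_abs_le_mul_pow {a b d r K : ℝ} (n : ℕ) (hK : 0 ≤ K) (hab : a ≤ b)
    (hda : 0 ≤ d + a) (hdb : d + b ≤ r) {g : ℝ → ℝ}
    (h : ∀ t ∈ Set.Ioc a b, |g t| ≤ K * (d + t) ^ n) :
    |∫ t in a..b, g t| ≤ K * (r ^ (n + 1) / (n + 1)) := by
  calc |∫ t in a..b, g t| ≤ ∫ t in a..b, K * (d + t) ^ n := by
        rw [← Real.norm_eq_abs]
        exact norm_integral_le_of_norm_le hab (.of_forall h)
          ((by fun_prop : Continuous fun t => K * (d + t) ^ n).intervalIntegrable _ _)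
    _ = K * (((d + b) ^ (n + 1) - (d + a) ^ (n + 1)) / (n + 1)) := by
        rw [integral_const_mul, integral_comp_add_left (· ^ n), integral_pow]
    _ ≤ K * (r ^ (n + 1) / (n + 1)) := by
        have : (d + b) ^ (n + 1) ≤ r ^ (n + 1) := by gcongr; linarith
        have := pow_nonneg hda (n + 1)
        gcongr
        linarith

end intervalIntegral

theorem mem_Eset {τ s : ℝ} (h0 : 0 ≤ s) (h1 : s ≤ 1) (h2 : s ≤ τ) (h3 : τ ≤ 2 - s) :
    (τ, s) ∈ Eset :=
  ⟨h0, h1, h2, h3⟩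

theorem zero_mem_Eset : ((0 : ℝ), (0 : ℝ)) ∈ Eset :=
  mem_Eset le_rfl zero_le_one le_rfl (by norm_num)

theorem isCompact_Eset : IsCompact Eset := by
  have hclosed : IsClosed Eset :=
    (isClosed_le continuous_const continuous_snd).inter <|
      (isClosed_le continuous_snd continuous_const).inter <|
        (isClosed_le continuous_snd continuous_fst).inter <|
          isClosed_le continuous_fst (continuous_const.sub continuous_snd)
  refine (isCompact_Icc (a := ((0 : ℝ), (0 : ℝ))) (b := (2, 1))).of_isClosed_subset hclosed ?_
  rintro ⟨τ, s⟩ ⟨h0, h1, h2, h3⟩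
  exact ⟨⟨by simp only; linarith, h0⟩, ⟨by simp only; linarith, h1⟩⟩

section IteratedIntegralBounds

variable {n : ℕ} {K ξ η : ℝ}

theorem abs_integral_rect_le (hK : 0 ≤ K) {g : ℝ → ℝ → ℝ}
    (hg : ∀ τ s, (τ, s) ∈ Eset → |g τ s| ≤ K * (τ + s) ^ n) (hq : (ξ, η) ∈ Eset) :
    |∫ τ in η..ξ, ∫ s in (0 : ℝ)..η, g τ s|
      ≤ K * ((ξ + η) ^ (n + 1) / (n + 1)) * (ξ - η) := by
  obtain ⟨h0, h1, h2, h3⟩ : 0 ≤ η ∧ η ≤ 1 ∧ η ≤ ξ ∧ ξ ≤ 2 - η := hq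
  refine abs_integral_le_of_abs_le_const h2 fun τ ⟨hτ, hτ'⟩ => ?_
  exact abs_integral_le_of_abs_le_mul_pow n hK h0 (by linarith) (by linarith)
    fun s ⟨hs, hs'⟩ => hg τ s (mem_Eset hs.le (by linarith) (by linarith) (by linarith))

theorem abs_integral_triangle_le (hK : 0 ≤ K) {g : ℝ → ℝ → ℝ}
    (hg : ∀ τ s, (τ, s) ∈ Eset → |g τ s| ≤ K * (τ + s) ^ n) (hq : (ξ, η) ∈ Eset) :
    |∫ τ in (0 : ℝ)..η, ∫ s in (0 : ℝ)..τ, g τ s|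
      ≤ K * ((ξ + η) ^ (n + 1) / (n + 1)) * η := by
  obtain ⟨h0, h1, h2, h3⟩ : 0 ≤ η ∧ η ≤ 1 ∧ η ≤ ξ ∧ ξ ≤ 2 - η := hq
  simpa using abs_integral_le_of_abs_le_const h0 fun τ ⟨hτ, hτ'⟩ =>
    abs_integral_le_of_abs_le_mul_pow n hK hτ.le (by linarith) (by linarith)
      fun s ⟨hs, hs'⟩ => hg τ s (mem_Eset hs.le (by linarith) hs' (by linarith))

theorem abs_integral_prism_le (hK : 0 ≤ K) {k : ℝ → ℝ → ℝ → ℝ}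
    (hk : ∀ z τ s, (τ, s) ∈ Eset → |k z τ s| ≤ K * (τ + s) ^ n) (hq : (ξ, η) ∈ Eset) :
    |∫ z in η..ξ, ∫ s in (0 : ℝ)..η, ∫ τ in z..(z + η - s), k z τ s|
      ≤ K * ((ξ + η) ^ (n + 1) / (n + 1)) * η * (ξ - η) := by
  obtain ⟨h0, h1, h2, h3⟩ : 0 ≤ η ∧ η ≤ 1 ∧ η ≤ ξ ∧ ξ ≤ 2 - η := hq
  refine abs_integral_le_of_abs_le_const h2 fun z ⟨hz, hz'⟩ =>
    (abs_integral_le_of_abs_le_const h0 fun s ⟨hs, hs'⟩ => ?_).trans_eq (by rw [sub_zero])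
  refine abs_integral_le_of_abs_le_mul_pow n hK (by linarith) (by linarith) (by linarith)
    fun τ ⟨hτ, hτ'⟩ => ?_
  rw [add_comm s τ]
  exact hk z τ s (mem_Eset hs.le (by linarith) (by linarith) (by linarith))

theorem abs_integral_pyramid_le (hK : 0 ≤ K) {k : ℝ → ℝ → ℝ → ℝ}
    (hk : ∀ z τ s, (τ, s) ∈ Eset → |k z τ s| ≤ K * (τ + s) ^ n) (hq : (ξ, η) ∈ Eset) :
    |∫ z in (0 : ℝ)..η, ∫ s in (0 : ℝ)..z, ∫ τ in z..(2 * z - s), k z τ s|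
      ≤ K * ((ξ + η) ^ (n + 1) / (n + 1)) * η * η := by
  obtain ⟨h0, h1, h2, h3⟩ : 0 ≤ η ∧ η ≤ 1 ∧ η ≤ ξ ∧ ξ ≤ 2 - η := hq
  have hR : 0 ≤ K * ((ξ + η) ^ (n + 1) / (n + 1)) := by
    have : 0 ≤ ξ + η := by linarith
    positivity
  refine (abs_integral_le_of_abs_le_const h0 fun z ⟨hz, hz'⟩ =>
    (abs_integral_le_of_abs_le_const hz.le fun s ⟨hs, hs'⟩ => ?_).trans
      (by rw [sub_zero]; exact mul_le_mul_of_nonneg_left hz' hR)).trans_eq (by rw [sub_zero])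
  refine abs_integral_le_of_abs_le_mul_pow n hK (by linarith) (by linarith) (by linarith)
    fun τ ⟨hτ, hτ'⟩ => ?_
  rw [add_comm s τ]
  exact hk z τ s (mem_Eset hs.le (by linarith) (by linarith) (by linarith))

end IteratedIntegralBounds

section KernelOperator

variable {c1 : ℝ → ℝ} {lam0 : ℝ} {f : ℝ → ℝ → ℝ}

theorem muT_congr {c1' : ℝ → ℝ} (hc : Set.EqOn c1 c1' (Set.Icc 0 1)) {τ s : ℝ}
    (hq : (τ, s) ∈ Eset) : muT c1 lam0 τ s = muT c1' lam0 τ s := by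
  obtain ⟨h0, h1, h2, h3⟩ : 0 ≤ s ∧ s ≤ 1 ∧ s ≤ τ ∧ τ ≤ 2 - s := hq
  unfold muT
  rw [hc ⟨by linarith, by linarith⟩, hc ⟨by linarith, by linarith⟩]

theorem abs_muT_le_sSup (hc1 : ContinuousOn c1 (Set.Icc 0 1)) {τ s : ℝ} (hq : (τ, s) ∈ Eset) :
    |muT c1 lam0 τ s|
      ≤ sSup ((fun q : ℝ × ℝ => |lam0 - c1 q.1 + c1 q.2|) '' (Set.Icc 0 1 ×ˢ Set.Icc 0 1)) := by
  obtain ⟨h0, h1, h2, h3⟩ : 0 ≤ s ∧ s ≤ 1 ∧ s ≤ τ ∧ τ ≤ 2 - s := hq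
  refine le_csSup ((isCompact_Icc.prod isCompact_Icc).bddAbove_image ?_)
    ⟨((τ + s) / 2, (τ - s) / 2), ⟨⟨by linarith, by linarith⟩, ⟨by linarith, by linarith⟩⟩, rfl⟩
  exact ((continuousOn_const.sub (hc1.comp continuousOn_fst fun q hq => hq.1)).add
    (hc1.comp continuousOn_snd fun q hq => hq.2)).abs

theorem continuous_Gzero (hf : Continuous fun q : ℝ × ℝ => f q.1 q.2) :
    Continuous fun q : ℝ × ℝ => Gzero lam0 f q.1 q.2 := by
  unfold Gzero
  fun_prop

theorem continuous_PhiOp (hc1 : Continuous c1) (hf : Continuous fun q : ℝ × ℝ => f q.1 q.2)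
    {H : ℝ → ℝ → ℝ} (hH : Continuous fun q : ℝ × ℝ => H q.1 q.2) :
    Continuous fun q : ℝ × ℝ => PhiOp c1 lam0 f H q.1 q.2 := by
  unfold PhiOp muT
  fun_prop

theorem PhiOp_sub (hc1 : Continuous c1) (hf : Continuous fun q : ℝ × ℝ => f q.1 q.2)
    {H₁ H₂ : ℝ → ℝ → ℝ} (hH₁ : Continuous fun q : ℝ × ℝ => H₁ q.1 q.2)
    (hH₂ : Continuous fun q : ℝ × ℝ => H₂ q.1 q.2) (ξ η : ℝ) :
    PhiOp c1 lam0 f (fun a b => H₁ a b - H₂ a b) ξ η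
      = PhiOp c1 lam0 f H₁ ξ η - PhiOp c1 lam0 f H₂ ξ η := by
  have hμ : Continuous fun q : ℝ × ℝ => muT c1 lam0 q.1 q.2 := by unfold muT; fun_prop
  unfold PhiOp
  simp (disch := exact Continuous.intervalIntegrable (by fun_prop) _ _) only
    [mul_sub, intervalIntegral.integral_sub]
  ring

theorem PhiOp_congr {c1' : ℝ → ℝ} (hc : Set.EqOn c1 c1' (Set.Icc 0 1)) {H H' : ℝ → ℝ → ℝ}
    (hH : ∀ τ s, (τ, s) ∈ Eset → H τ s = H' τ s) {ξ η : ℝ} (hq : (ξ, η) ∈ Eset) :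
    PhiOp c1 lam0 f H ξ η = PhiOp c1' lam0 f H' ξ η := by
  have hμH : ∀ τ s, (τ, s) ∈ Eset → muT c1 lam0 τ s * H τ s = muT c1' lam0 τ s * H' τ s :=
    fun τ s h => by rw [muT_congr hc h, hH τ s h]
  obtain ⟨h0, h1, h2, h3⟩ : 0 ≤ η ∧ η ≤ 1 ∧ η ≤ ξ ∧ ξ ≤ 2 - η := hq
  unfold PhiOp
  refine congr_arg₂ (· + ·) (congr_arg₂ (· + ·) (congr_arg₂ (· + ·)
    (congr_arg _ ?rect) (congr_arg _ ?triangle)) (congr_arg _ ?prism)) (congr_arg _ ?pyramid)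
  case rect =>
    refine integral_congr_of_le h2 fun τ hτ hτ' => integral_congr_of_le h0 fun s hs hs' => ?_
    exact hμH τ s (mem_Eset hs (by linarith) (by linarith) (by linarith))
  case triangle =>
    refine integral_congr_of_le h0 fun τ hτ hτ' => integral_congr_of_le hτ fun s hs hs' => ?_
    exact hμH τ s (mem_Eset hs (by linarith) hs' (by linarith))
  case prism =>
    refine integral_congr_of_le h2 fun z hz hz' => integral_congr_of_le h0 fun s hs hs' =>
      integral_congr_of_le (by linarith) fun τ hτ hτ' => ?_
    rw [hH τ s (mem_Eset hs (by linarith) (by linarith) (by linarith))]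
  case pyramid =>
    refine integral_congr_of_le h0 fun z hz hz' => integral_congr_of_le hz fun s hs hs' =>
      integral_congr_of_le (by linarith) fun τ hτ hτ' => ?_
    rw [hH τ s (mem_Eset hs (by linarith) (by linarith) (by linarith))]

theorem abs_PhiOp_le {lam1 fbar : ℝ} (hμ : ∀ τ s, (τ, s) ∈ Eset → |muT c1 lam0 τ s| ≤ lam1)
    (hfb : ∀ x y, |f x y| ≤ fbar) {D : ℝ → ℝ → ℝ} {n : ℕ} {c : ℝ} (hc : 0 ≤ c)
    (hD : ∀ τ s, (τ, s) ∈ Eset → |D τ s| ≤ c * (τ + s) ^ n) {ξ η : ℝ} (hq : (ξ, η) ∈ Eset) :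
    |PhiOp c1 lam0 f D ξ η| ≤ (lam1 + fbar) / 2 * (c * (ξ + η) ^ (n + 1) / (n + 1)) := by
  have hlam1 : 0 ≤ lam1 := (abs_nonneg _).trans (hμ 0 0 zero_mem_Eset)
  have hfbar : 0 ≤ fbar := (abs_nonneg _).trans (hfb 0 0)
  have hμD : ∀ τ s, (τ, s) ∈ Eset → |muT c1 lam0 τ s * D τ s| ≤ lam1 * c * (τ + s) ^ n :=
    fun τ s h => by
      rw [abs_mul, mul_assoc]
      exact mul_le_mul (hμ τ s h) (hD τ s h) (abs_nonneg _) hlam1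
  have hfD : ∀ z τ s, (τ, s) ∈ Eset →
      |f ((τ - s) / 2) (z - (τ + s) / 2) * D τ s| ≤ fbar * c * (τ + s) ^ n := fun z τ s h => by
    rw [abs_mul, mul_assoc]
    exact mul_le_mul (hfb _ _) (hD τ s h) (abs_nonneg _) hfbar
  have hrect := abs_integral_rect_le (mul_nonneg hlam1 hc) hμD hq
  have htriangle := abs_integral_triangle_le (mul_nonneg hlam1 hc) hμD hq
  have hprism := abs_integral_prism_le (mul_nonneg hfbar hc) hfD hq
  have hpyramid := abs_integral_pyramid_le (mul_nonneg hfbar hc) hfD hq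
  obtain ⟨h0, h1, h2, h3⟩ : 0 ≤ η ∧ η ≤ 1 ∧ η ≤ ξ ∧ ξ ≤ 2 - η := hq
  set R := (ξ + η) ^ (n + 1) / (n + 1) with hR
  have hcR : 0 ≤ c * R := by
    have : 0 ≤ ξ + η := by linarith
    positivity
  unfold PhiOp
  calc _ ≤ 1 / 4 * (lam1 * c * R * (ξ - η)) + 1 / 2 * (lam1 * c * R * η)
        + 1 / 4 * (fbar * c * R * η * (ξ - η)) + 1 / 2 * (fbar * c * R * η * η) := by
        refine (abs_add_le _ _).trans (add_le_add ((abs_add_le _ _).trans (add_le_add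
          ((abs_add_le _ _).trans (add_le_add ?_ ?_)) ?_)) ?_) <;>
          rw [abs_mul, abs_of_pos (by norm_num)] <;> gcongr
    _ = (lam1 * (ξ + η) + fbar * η * (ξ + η)) / 4 * (c * R) := by ring
    _ ≤ (lam1 * 2 + fbar * 1 * 2) / 4 * (c * R) := by gcongr <;> linarith
    _ = _ := by rw [hR]; ring

theorem continuousOn_PhiOp (hc1 : ContinuousOn c1 (Set.Icc 0 1))
    (hf : Continuous fun q : ℝ × ℝ => f q.1 q.2) {H : ℝ → ℝ → ℝ}
    (hH : ContinuousOn (fun q : ℝ × ℝ => H q.1 q.2) Eset) :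
    ContinuousOn (fun q : ℝ × ℝ => PhiOp c1 lam0 f H q.1 q.2) Eset := by
  obtain ⟨c1', hc1', hc1e⟩ := hc1.exists_continuous_eqOn isClosed_Icc
  obtain ⟨H', hH', hHe⟩ := hH.exists_continuous_eqOn isCompact_Eset.isClosed
  refine (continuous_PhiOp hc1' hf (H := fun a b => H' (a, b)) hH').continuousOn.congr
    fun q hq => PhiOp_congr hc1e.symm (fun τ s h => (hHe h).symm) hq

theorem abs_PhiOp_sub_le (hc1 : ContinuousOn c1 (Set.Icc 0 1))
    (hf : Continuous fun q : ℝ × ℝ => f q.1 q.2) {lam1 fbar : ℝ}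
    (hμ : ∀ τ s, (τ, s) ∈ Eset → |muT c1 lam0 τ s| ≤ lam1) (hfb : ∀ x y, |f x y| ≤ fbar)
    {H₁ H₂ : ℝ → ℝ → ℝ} (hH₁ : ContinuousOn (fun q : ℝ × ℝ => H₁ q.1 q.2) Eset)
    (hH₂ : ContinuousOn (fun q : ℝ × ℝ => H₂ q.1 q.2) Eset) {n : ℕ} {c : ℝ} (hc : 0 ≤ c)
    (hD : ∀ τ s, (τ, s) ∈ Eset → |H₁ τ s - H₂ τ s| ≤ c * (τ + s) ^ n) {ξ η : ℝ}
    (hq : (ξ, η) ∈ Eset) :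
    |PhiOp c1 lam0 f H₁ ξ η - PhiOp c1 lam0 f H₂ ξ η|
      ≤ (lam1 + fbar) / 2 * (c * (ξ + η) ^ (n + 1) / (n + 1)) := by
  obtain ⟨c1', hc1', hc1e⟩ := hc1.exists_continuous_eqOn isClosed_Icc
  obtain ⟨H₁', hH₁', hH₁e⟩ := hH₁.exists_continuous_eqOn isCompact_Eset.isClosed
  obtain ⟨H₂', hH₂', hH₂e⟩ := hH₂.exists_continuous_eqOn isCompact_Eset.isClosed
  rw [PhiOp_congr hc1e.symm (H' := fun a b => H₁' (a, b)) (fun τ s h => (hH₁e h).symm) hq,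
    PhiOp_congr hc1e.symm (H' := fun a b => H₂' (a, b)) (fun τ s h => (hH₂e h).symm) hq,
    ← PhiOp_sub hc1' hf hH₁' hH₂']
  refine abs_PhiOp_le (fun τ s h => muT_congr hc1e h ▸ hμ τ s h) hfb hc (fun τ s h => ?_) hq
  simpa only [hH₁e h, hH₂e h] using hD τ s h

theorem continuousOn_of_successive_approximation (hc1 : ContinuousOn c1 (Set.Icc 0 1))
    (hf : Continuous fun q : ℝ × ℝ => f q.1 q.2) {G : ℕ → ℝ → ℝ → ℝ}
    (hG0 : ∀ ξ η, G 0 ξ η = Gzero lam0 f ξ η)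
    (hGrec : ∀ n ξ η, G (n + 1) ξ η = Gzero lam0 f ξ η + PhiOp c1 lam0 f (G n) ξ η) (n : ℕ) :
    ContinuousOn (fun q : ℝ × ℝ => G n q.1 q.2) Eset := by
  induction n with
  | zero => simpa only [hG0] using (continuous_Gzero hf).continuousOn
  | succ n ih =>
    simp only [hGrec]
    exact (continuous_Gzero hf).continuousOn.add (continuousOn_PhiOp hc1 hf ih)

end KernelOperator

theorem stmt16 (c1 : ℝ → ℝ) (lam0 : ℝ) (f : ℝ → ℝ → ℝ)
    (hc1 : ContDiffOn ℝ 1 c1 (Set.Icc 0 1))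
    (hfc : Continuous (fun q : ℝ × ℝ => f q.1 q.2))
    (hfbdd : ∃ C : ℝ, ∀ x y : ℝ, |f x y| ≤ C)
    -- a continuous solution `Ḡ` of the kernel integral equation
    (Gbar : ℝ → ℝ → ℝ)
    (hGbar_cont : ContinuousOn (fun q : ℝ × ℝ => Gbar q.1 q.2) Eset)
    (hGbar : ∀ ξ η : ℝ, (ξ, η) ∈ Eset →
      Gbar ξ η = Gzero lam0 f ξ η + PhiOp c1 lam0 f Gbar ξ η)
    -- the successive approximation sequence
    (G : ℕ → ℝ → ℝ → ℝ)
    (hG0 : ∀ ξ η : ℝ, G 0 ξ η = Gzero lam0 f ξ η)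
    (hGrec : ∀ n : ℕ, ∀ ξ η : ℝ, G (n + 1) ξ η = Gzero lam0 f ξ η + PhiOp c1 lam0 f (G n) ξ η)
    -- the constants
    (L fbar lam1 M : ℝ)
    (hL : L = sSup ((fun q : ℝ × ℝ => |PhiOp c1 lam0 f Gbar q.1 q.2|) '' Eset))
    (hfbar : fbar = sSup (Set.range fun q : ℝ × ℝ => |f q.1 q.2|))
    (hlam1 : lam1 = max |lam0|
      (sSup ((fun q : ℝ × ℝ => |lam0 - c1 q.1 + c1 q.2|) '' (Set.Icc 0 1 ×ˢ Set.Icc 0 1))))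
    (hM : M = (lam1 + fbar) / 2) :
    ∀ n : ℕ, ∀ ξ η : ℝ, (ξ, η) ∈ Eset →
      |G n ξ η - Gbar ξ η| ≤ L * M ^ n / (Nat.factorial n : ℝ) * (ξ + η) ^ n := by
  obtain ⟨C, hC⟩ := hfbdd
  replace hc1 := hc1.continuousOn
  have hf_le (x y : ℝ) : |f x y| ≤ fbar :=
    hfbar ▸ le_csSup ⟨C, Set.forall_mem_range.2 fun q => hC q.1 q.2⟩ ⟨(x, y), rfl⟩
  have hμ_le (τ s : ℝ) (h : (τ, s) ∈ Eset) : |muT c1 lam0 τ s| ≤ lam1 :=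
    hlam1 ▸ (abs_muT_le_sSup hc1 h).trans (le_max_right _ _)
  have hΦ_le (ξ η : ℝ) (h : (ξ, η) ∈ Eset) : |PhiOp c1 lam0 f Gbar ξ η| ≤ L :=
    hL ▸ le_csSup (isCompact_Eset.bddAbove_image (continuousOn_PhiOp hc1 hfc hGbar_cont).abs)
      ⟨(ξ, η), h, rfl⟩
  have hL0 : 0 ≤ L := (abs_nonneg _).trans (hΦ_le 0 0 zero_mem_Eset)
  have hM0 : 0 ≤ M := hM ▸ div_nonneg (add_nonneg ((abs_nonneg _).trans
    (hμ_le 0 0 zero_mem_Eset)) ((abs_nonneg _).trans (hf_le 0 0))) zero_le_two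
  intro n
  induction n with
  | zero => intro ξ η hq; simpa [hG0, hGbar ξ η hq] using hΦ_le ξ η hq
  | succ n ih =>
    intro ξ η hq
    calc |G (n + 1) ξ η - Gbar ξ η|
        = |PhiOp c1 lam0 f (G n) ξ η - PhiOp c1 lam0 f Gbar ξ η| := by
          rw [hGrec, hGbar ξ η hq, add_sub_add_left_eq_sub]
      _ ≤ M * (L * M ^ n / n.factorial * (ξ + η) ^ (n + 1) / (n + 1)) :=
          hM ▸ abs_PhiOp_sub_le hc1 hfc hμ_le hf_le
            (continuousOn_of_successive_approximation hc1 hfc hG0 hGrec n) hGbar_cont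
            (by positivity) ih hq
      _ = L * M ^ (n + 1) / (n + 1).factorial * (ξ + η) ^ (n + 1) := by
          rw [Nat.factorial_succ]
          push_cast
          field_simp
          ring
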